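/- arXiv:1207.6372 — 8 statements merged into one kernel-verified Lean document; each statement's English description precedes it below -/
import Mathlib

section
/- Let P and Q be real cyclic Hankel matrices of order n. Then the Böttcher–Wenzel form 2(‖P‖²‖Q‖² − trace(PᵀQ)²) − ‖PQ − QP‖² is nonnegative; indeed it equals 2n(n Σ_{1≤i<j≤n} z_{i,j}² − Σ_{i=1}^{k} t_i²) where z_{i,j} = p_i q_j − q_i p_j, k = ⌊(n−1)/2⌋, and t_i = Σ_{j=1}^{n−i} z_{j,i+j} − Σ_{j=1}^{i} z_{j,n−i+j}, and this quantity is ≥ 0. -/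
/-!
With `a x = p (x + 1)` and `b x = q (x + 1)` on `Fin n`, `P i j = a (i + j)` with addition
mod `n`. Every column of `P` is a permutation of `a`, so `trace (Pᵀ Q) = n ⟨a, b⟩`, and `PQ - QP`
is constant along the cyclic diagonals `j - i = d`, with value
`t_d = ∑ₘ (a m b (m + d) - b m a (m + d))`, an odd function of `d`.
Hence `‖PQ - QP‖² = n ∑_d t_d² = 2n ∑_{d=1}^{k} t_d²` (for even `n` the diagonal `d = n/2`
vanishes), while Lagrange's identity turns `‖P‖²‖Q‖² - trace (Pᵀ Q)²` into `n² ∑_{i<j} z_{i,j}²`.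
Nonnegativity: by Cauchy–Schwarz `t_d² ≤ n ∑ₘ z_{m,m+d}²`, and summing over `d` meets every
pair `(m, m')` exactly once.
-/

open Matrix Finset

section AddGroup

variable {G R : Type*} [AddCommGroup G] [Fintype G]

lemma Fintype.sum_sum_comp_add {M : Type*} [AddCommMonoid M] (F : G → M) :
    ∑ i, ∑ j, F (i + j) = Fintype.card G • ∑ g, F g := by
  have h (i : G) : ∑ j, F (i + j) = ∑ g, F g := Equiv.sum_comp (Equiv.addLeft i) F
  simp only [h, sum_const, card_univ]

lemma Fintype.sum_sum_comp_sub {M : Type*} [AddCommMonoid M] (F : G → M) :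
    ∑ i, ∑ j, F (j - i) = Fintype.card G • ∑ g, F g := by
  have h (i : G) : ∑ j, F (j - i) = ∑ g, F g := Equiv.sum_comp (Equiv.subRight i) F
  simp only [h, sum_const, card_univ]

lemma Fintype.sum_sum_apply_add {M : Type*} [AddCommMonoid M] (F : G → G → M) :
    ∑ d, ∑ m, F m (m + d) = ∑ m, ∑ m', F m m' := by
  rw [Finset.sum_comm]
  exact Fintype.sum_congr _ _ fun m => Equiv.sum_comp (Equiv.addLeft m) (F m)

variable [CommRing R]

lemma Finset.sum_sum_sq_mul_sub_mul {ι : Type*} (s : Finset ι) (a b : ι → R) :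
    ∑ i ∈ s, ∑ j ∈ s, (a i * b j - b i * a j) ^ 2 =
      2 * ((∑ i ∈ s, a i ^ 2) * ∑ i ∈ s, b i ^ 2 - (∑ i ∈ s, a i * b i) ^ 2) := by
  calc ∑ i ∈ s, ∑ j ∈ s, (a i * b j - b i * a j) ^ 2
      = ∑ i ∈ s, ∑ j ∈ s, (a i ^ 2 * b j ^ 2 + b i ^ 2 * a j ^ 2
          - 2 * (a i * b i) * (a j * b j)) :=
        sum_congr rfl fun i _ => sum_congr rfl fun j _ => by ring
    _ = _ := by
        simp only [sum_add_distrib, sum_sub_distrib, ← mul_sum, ← sum_mul]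
        ring

namespace Matrix

def cyclicHankel (a : G → R) : Matrix G G R := of fun i j => a (i + j)

/-- The symbol of the commutator of two cyclic Hankel matrices; on `Fin n` it is the paper's `t_d`
(see `commSymbol_natCast`). -/
def commSymbol (a b : G → R) (d : G) : R := ∑ m, (a m * b (m + d) - b m * a (m + d))

lemma trace_transpose_mul_cyclicHankel (a b : G → R) :
    trace ((cyclicHankel a)ᵀ * cyclicHankel b) = Fintype.card G * ∑ g, a g * b g := by
  simp only [trace, diag, mul_apply, transpose_apply, cyclicHankel, of_apply]
  rw [Finset.sum_comm, Fintype.sum_sum_comp_add fun g => a g * b g, nsmul_eq_mul]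

lemma cyclicHankel_mul_apply (a b : G → R) (i j : G) :
    (cyclicHankel a * cyclicHankel b) i j = ∑ m, a m * b (m + (j - i)) := by
  rw [mul_apply]
  refine Fintype.sum_equiv (Equiv.addLeft i) _ _ fun k => ?_
  simp only [cyclicHankel, of_apply, Equiv.coe_addLeft]
  congr 2
  abel

lemma cyclicHankel_commutator_apply (a b : G → R) (i j : G) :
    (cyclicHankel a * cyclicHankel b - cyclicHankel b * cyclicHankel a) i j =
      commSymbol a b (j - i) := by
  rw [sub_apply, cyclicHankel_mul_apply, cyclicHankel_mul_apply, commSymbol, ← sum_sub_distrib]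

lemma trace_transpose_mul_self_cyclicHankel_commutator (a b : G → R) :
    trace ((cyclicHankel a * cyclicHankel b - cyclicHankel b * cyclicHankel a)ᵀ *
        (cyclicHankel a * cyclicHankel b - cyclicHankel b * cyclicHankel a)) =
      Fintype.card G * ∑ d, commSymbol a b d ^ 2 := by
  simp only [trace, diag, mul_apply, transpose_apply, cyclicHankel_commutator_apply, ← sq]
  rw [Finset.sum_comm, Fintype.sum_sum_comp_sub fun d => commSymbol a b d ^ 2, nsmul_eq_mul]

lemma commSymbol_odd (a b : G → R) : (commSymbol a b).Odd := fun d => by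
  rw [commSymbol, ← Equiv.sum_comp (Equiv.addRight d), commSymbol, ← sum_neg_distrib]
  refine Fintype.sum_congr _ _ fun m => ?_
  simp only [Equiv.coe_addRight, add_neg_cancel_right]
  ring

theorem cyclicHankel_bottcherWenzel [LinearOrder R] [IsStrictOrderedRing R] (a b : G → R) :
    trace ((cyclicHankel a * cyclicHankel b - cyclicHankel b * cyclicHankel a)ᵀ *
        (cyclicHankel a * cyclicHankel b - cyclicHankel b * cyclicHankel a)) ≤
      2 * (trace ((cyclicHankel a)ᵀ * cyclicHankel a) *
          trace ((cyclicHankel b)ᵀ * cyclicHankel b) -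
        trace ((cyclicHankel a)ᵀ * cyclicHankel b) ^ 2) := by
  have hCS (d : G) : commSymbol a b d ^ 2 ≤
      Fintype.card G * ∑ m, (a m * b (m + d) - b m * a (m + d)) ^ 2 :=
    sq_sum_le_card_mul_sum_sq
  calc _ = Fintype.card G * ∑ d, commSymbol a b d ^ 2 :=
        trace_transpose_mul_self_cyclicHankel_commutator a b
    _ ≤ Fintype.card G *
          ∑ d, Fintype.card G * ∑ m, (a m * b (m + d) - b m * a (m + d)) ^ 2 := by
        gcongr with d
        exact hCS d
    _ = Fintype.card G ^ 2 * ∑ m, ∑ m', (a m * b m' - b m * a m') ^ 2 := by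
        rw [← mul_sum, Fintype.sum_sum_apply_add fun m m' => (a m * b m' - b m * a m') ^ 2]
        ring
    _ = _ := by
        rw [sum_sum_sq_mul_sub_mul, trace_transpose_mul_cyclicHankel,
          trace_transpose_mul_cyclicHankel, trace_transpose_mul_cyclicHankel]
        simp only [← sq]
        ring

end Matrix

end AddGroup

lemma Finset.sum_Icc_one_eq_sum_range {M : Type*} [AddCommMonoid M] (g : ℕ → M) (N : ℕ) :
    ∑ j ∈ Icc 1 N, g j = ∑ m ∈ range N, g (m + 1) := by
  rw [← Ico_add_one_right_eq_Icc, sum_Ico_eq_sum_range, Nat.add_sub_cancel]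
  exact sum_congr rfl fun m _ => by rw [Nat.add_comm]

lemma Fin.sum_univ_eq_sum_Icc_one {M : Type*} [AddCommMonoid M] (g : ℕ → M) (n : ℕ) :
    ∑ x : Fin n, g (x + 1) = ∑ j ∈ Icc 1 n, g j := by
  rw [sum_Icc_one_eq_sum_range, Fin.sum_univ_eq_sum_range (fun m => g (m + 1))]

/-- The last sum is empty for odd `n` and runs over `{n / 2}` for even `n`. -/
lemma Finset.sum_range_eq_add_sum_Icc_add_sum_Ioo {M : Type*} [AddCommMonoid M] (g : ℕ → M)
    {n : ℕ} (hn : 0 < n) :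
    ∑ d ∈ range n, g d = g 0 + ∑ d ∈ Icc 1 ((n - 1) / 2), (g d + g (n - d)) +
      ∑ d ∈ Ioo ((n - 1) / 2) (n - (n - 1) / 2), g d := by
  set k := (n - 1) / 2
  have hk : k + 1 ≤ n - k := by omega
  have hreflect : ∑ d ∈ Icc 1 k, g (n - d) = ∑ d ∈ Ico (n - k) n, g d := by
    rw [← Ico_add_one_right_eq_Icc, sum_Ico_reflect g 1 (by omega : k + 1 ≤ n + 1)]
    congr 2
    omega
  rw [sum_add_distrib, hreflect, range_eq_Ico, ← Ico_add_one_left_eq_Ioo,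
    ← Ico_add_one_right_eq_Icc, ← sum_Ico_consecutive g (Nat.zero_le 1) hn,
    ← sum_Ico_consecutive g (by omega : 1 ≤ k + 1) (by omega : k + 1 ≤ n),
    ← sum_Ico_consecutive g hk (Nat.sub_le n k), Nat.Ico_zero_eq_range, sum_range_one]
  abel

lemma Finset.sum_Icc_sum_Icc_eq_two_nsmul {M : Type*} [AddCommMonoid M] (w : ℕ → ℕ → M)
    (hsymm : ∀ i j, w i j = w j i) (hdiag : ∀ i, w i i = 0) (m n : ℕ) :
    ∑ i ∈ Icc m n, ∑ j ∈ Icc m n, w i j = 2 • ∑ i ∈ Icc m n, ∑ j ∈ Icc (i + 1) n, w i j := by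
  have hsplit : ∀ i ∈ Icc m n,
      ∑ j ∈ Icc m n, w i j = ∑ j ∈ Ico m i, w i j + ∑ j ∈ Icc (i + 1) n, w i j := by
    intro i hi
    rw [mem_Icc] at hi
    rw [← Ico_add_one_right_eq_Icc, ← Ico_add_one_right_eq_Icc,
      ← sum_Ico_consecutive _ hi.1 (by omega : i ≤ n + 1),
      sum_eq_sum_Ico_succ_bot (by omega : i < n + 1), hdiag, zero_add]
  have hlower : ∑ i ∈ Icc m n, ∑ j ∈ Ico m i, w i j =
      ∑ i ∈ Icc m n, ∑ j ∈ Icc (i + 1) n, w i j := by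
    rw [sum_comm' (t' := Icc m n) (s' := fun j => Icc (j + 1) n)]
    · exact sum_congr rfl fun j _ => sum_congr rfl fun i _ => hsymm i j
    · intro i j
      simp only [mem_Icc, mem_Ico]
      omega
  rw [sum_congr rfl hsplit, sum_add_distrib, hlower, two_nsmul]

lemma Finset.sum_Icc_sum_Icc_sq_mul_sub_mul {R : Type*} [CommRing R] [IsAddTorsionFree R]
    (a b : ℕ → R) (m n : ℕ) :
    ∑ i ∈ Icc m n, ∑ j ∈ Icc (i + 1) n, (a i * b j - b i * a j) ^ 2 =
      (∑ i ∈ Icc m n, a i ^ 2) * ∑ i ∈ Icc m n, b i ^ 2 - (∑ i ∈ Icc m n, a i * b i) ^ 2 := by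
  have h := sum_sum_sq_mul_sub_mul (Icc m n) a b
  rw [sum_Icc_sum_Icc_eq_two_nsmul _ (fun i j => by ring) (fun i => by ring), two_mul,
    ← two_nsmul] at h
  exact nsmul_right_injective two_ne_zero h

section NatCast

open Fin.NatCast

lemma Fin.sum_sq_eq_two_mul_sum_Icc_of_odd {R : Type*} [CommRing R] [IsAddTorsionFree R]
    {n : ℕ} [NeZero n] {f : Fin n → R} (hf : f.Odd) :
    ∑ x, f x ^ 2 = 2 * ∑ d ∈ Icc 1 ((n - 1) / 2), f d ^ 2 := by
  have hneg {d : ℕ} (hd : d ≤ n) : ((n - d : ℕ) : Fin n) = -(d : Fin n) := by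
    refine eq_neg_of_add_eq_zero_left ?_
    rw [← Nat.cast_add, Nat.sub_add_cancel hd, Fin.natCast_self]
  have hmid : ∀ d ∈ Ioo ((n - 1) / 2) (n - (n - 1) / 2), f d ^ 2 = 0 := by
    intro d hd
    have hnd : n - d = d := by rw [mem_Ioo] at hd; omega
    have hself : -f d = f d := by rw [← hf.eq, ← hneg (by omega), hnd]
    rw [neg_eq_self.mp hself, zero_pow two_ne_zero]
  have hrange : ∑ x, f x ^ 2 = ∑ d ∈ range n, f d ^ 2 := by
    rw [← Fin.sum_univ_eq_sum_range (fun d : ℕ => f d ^ 2)]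
    simp only [Fin.cast_val_eq_self]
  rw [hrange, sum_range_eq_add_sum_Icc_add_sum_Ioo _ (NeZero.pos n), sum_eq_zero hmid,
    Nat.cast_zero, hf.map_zero, zero_pow two_ne_zero, zero_add, add_zero, two_mul,
    ← sum_add_distrib]
  refine sum_congr rfl fun d hd => ?_
  rw [hneg (by rw [mem_Icc] at hd; omega), hf.eq, neg_sq]

lemma Matrix.commSymbol_natCast {R : Type*} [CommRing R] {n : ℕ} [NeZero n] (p q : ℕ → R)
    {d : ℕ} (hd : d ≤ n) :
    commSymbol (fun x : Fin n => p (x + 1)) (fun x => q (x + 1)) d =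
      ∑ j ∈ Icc 1 (n - d), (p j * q (d + j) - q j * p (d + j)) -
        ∑ j ∈ Icc 1 d, (p j * q (n - d + j) - q j * p (n - d + j)) := by
  set F : ℕ → R := fun m => p (m + 1) * q ((m + d) % n + 1) - q (m + 1) * p ((m + d) % n + 1)
  have hF : commSymbol (fun x : Fin n => p (x + 1)) (fun x => q (x + 1)) d =
      ∑ m ∈ range n, F m := by
    rw [commSymbol, ← Fin.sum_univ_eq_sum_range F]
    refine Fintype.sum_congr _ _ fun x => ?_
    simp only [F, Fin.val_add, Fin.val_natCast, Nat.add_mod_mod]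
  have hsplit := sum_range_add F (n - d) d
  rw [Nat.sub_add_cancel hd] at hsplit
  rw [hF, hsplit, sum_Icc_one_eq_sum_range, sum_Icc_one_eq_sum_range, sub_eq_add_neg,
    ← sum_neg_distrib]
  congr 1
  · refine sum_congr rfl fun m hm => ?_
    rw [mem_range] at hm
    simp only [F, Nat.mod_eq_of_lt (show m + d < n by omega),
      show d + (m + 1) = m + d + 1 by omega]
  · refine sum_congr rfl fun m hm => ?_
    rw [mem_range] at hm
    have hwrap : (n - d + m + d) % n = m := by
      rw [show n - d + m + d = m + n by omega, Nat.add_mod_right, Nat.mod_eq_of_lt (by omega)]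
    simp only [F, hwrap, ← Nat.add_assoc]
    ring

end NatCast

/-- For cyclic Hankel matrices the Böttcher–Wenzel form equals
`2n(n ∑_{i<j} z_{i,j}² − ∑_{i=1}^k t_i²)` with `k = ⌊(n−1)/2⌋`, and is nonnegative. -/
theorem cyclic_hankel_bw (n : ℕ) (hn : 0 < n) (p q : ℕ → ℝ)
    (P Q : Matrix (Fin n) (Fin n) ℝ)
    (hP : ∀ i j, P i j = p ((i.val + j.val) % n + 1))
    (hQ : ∀ i j, Q i j = q ((i.val + j.val) % n + 1))
    (z : ℕ → ℕ → ℝ) (hz : ∀ a b, z a b = p a * q b - q a * p b)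
    (t : ℕ → ℝ)
    (ht : ∀ i, t i = (∑ j ∈ Finset.Icc 1 (n - i), z j (i + j)) -
        ∑ j ∈ Finset.Icc 1 i, z j (n - i + j)) :
    2 * (Matrix.trace (Pᵀ * P) * Matrix.trace (Qᵀ * Q) -
        (Matrix.trace (Pᵀ * Q)) ^ 2) -
      Matrix.trace ((P * Q - Q * P)ᵀ * (P * Q - Q * P)) =
        2 * n * ((n : ℝ) * (∑ i ∈ Finset.Icc 1 n, ∑ j ∈ Finset.Icc (i + 1) n, z i j ^ 2) -
          ∑ i ∈ Finset.Icc 1 ((n - 1) / 2), t i ^ 2) ∧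
    0 ≤ 2 * (Matrix.trace (Pᵀ * P) * Matrix.trace (Qᵀ * Q) -
        (Matrix.trace (Pᵀ * Q)) ^ 2) -
      Matrix.trace ((P * Q - Q * P)ᵀ * (P * Q - Q * P)) := by
  have : NeZero n := ⟨hn.ne'⟩
  set a : Fin n → ℝ := fun x => p (x + 1)
  set b : Fin n → ℝ := fun x => q (x + 1)
  have hPa : P = cyclicHankel a := by
    ext i j; simp only [hP, cyclicHankel, of_apply, a, Fin.val_add]
  have hQb : Q = cyclicHankel b := by
    ext i j; simp only [hQ, cyclicHankel, of_apply, b, Fin.val_add]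
  have hgram : ∑ i ∈ Icc 1 n, ∑ j ∈ Icc (i + 1) n, z i j ^ 2 =
      (∑ x, a x ^ 2) * (∑ x, b x ^ 2) - (∑ x, a x * b x) ^ 2 := by
    simp only [hz, sum_Icc_sum_Icc_sq_mul_sub_mul]
    rw [← Fin.sum_univ_eq_sum_Icc_one, ← Fin.sum_univ_eq_sum_Icc_one,
      ← Fin.sum_univ_eq_sum_Icc_one]
  have hsymbol : ∑ d, commSymbol a b d ^ 2 = 2 * ∑ i ∈ Icc 1 ((n - 1) / 2), t i ^ 2 := by
    rw [Fin.sum_sq_eq_two_mul_sum_Icc_of_odd (commSymbol_odd a b)]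
    refine congrArg _ (sum_congr rfl fun i hi => ?_)
    rw [ht, commSymbol_natCast p q (by rw [mem_Icc] at hi; omega)]
    simp only [hz]
  rw [hPa, hQb]
  refine ⟨?_, sub_nonneg.mpr (cyclicHankel_bottcherWenzel a b)⟩
  rw [trace_transpose_mul_self_cyclicHankel_commutator, trace_transpose_mul_cyclicHankel,
    trace_transpose_mul_cyclicHankel, trace_transpose_mul_cyclicHankel, hsymbol, hgram,
    Fintype.card_fin]
  simp only [← sq]
  ring
end

section
/- Let n ≥ 2, k = ⌊(n−1)/2⌋, and let z_{i,j} ∈ ℝ for 1 ≤ i < j ≤ n. Define t_i = Σ_{j=1}^{n−i} z_{j,i+j} − Σ_{j=1}^{i} z_{j,n−i+j} for i = 1,…,k. Then Σ_{i=1}^{k} t_i² ≤ n Σ_{1≤i<j≤n} z_{i,j}², with equality possible only when the Cauchy–Schwarz bounds are attained; in particular each t_i is a sum of n distinct terms ±z_{a,b} with all index pairs (a,b) distinct across different i. -/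
/-!
Split `t_i = D_i - D_{n-i}`, where `D_d = ∑_j z_{j,j+d}` is the sum along the `d`-th
superdiagonal (which has `n - d` entries). Cauchy–Schwarz on the `n` terms gives
`t_i² ≤ n (Q_i + Q_{n-i})`, with `Q_d` the sum of squares along that diagonal. For
`1 ≤ i ≤ ⌊(n-1)/2⌋` we have `i < n - i`, so the diagonals `i, n - i` occurring for different `i`
are all distinct, and summing over `i` leaves a partial sum of `∑_d Q_d = ∑_{i<j} z_{i,j}²`.
-/

open Finset

def diagSum {M : Type*} [AddCommMonoid M] (f : ℕ → ℕ → M) (n d : ℕ) : M :=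
  ∑ a ∈ Icc 1 (n - d), f a (d + a)

theorem sum_upper_triangle_eq_sum_diagSum {M : Type*} [AddCommMonoid M] (f : ℕ → ℕ → M)
    (n : ℕ) :
    ∑ i ∈ Icc 1 n, ∑ j ∈ Icc (i + 1) n, f i j = ∑ d ∈ Icc 1 (n - 1), diagSum f n d := by
  have shift : ∀ i, ∑ j ∈ Icc (i + 1) n, f i j = ∑ d ∈ Icc 1 (n - i), f i (d + i) := by
    intro i
    refine (sum_nbij' (· + i) (· - i) ?_ ?_ ?_ ?_ fun _ _ => rfl).symm
    all_goals intro _ h; simp only [mem_Icc] at h ⊢; omega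
  rw [sum_congr rfl fun i _ => shift i]
  exact sum_comm' fun i d => by simp only [mem_Icc]; omega

theorem sq_sum_sub_sum_le {ι κ α : Type*} [CommRing α] [LinearOrder α] [IsStrictOrderedRing α]
    (s : Finset ι) (t : Finset κ) (f : ι → α) (g : κ → α) :
    (∑ i ∈ s, f i - ∑ j ∈ t, g j) ^ 2 ≤
      (#s + #t : α) * (∑ i ∈ s, f i ^ 2 + ∑ j ∈ t, g j ^ 2) := by
  simpa only [sub_eq_add_neg, sum_disjSum, Sum.elim_inl, Sum.elim_inr, Pi.neg_apply,
    sum_neg_distrib, card_disjSum, Nat.cast_add, even_two, Even.neg_pow]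
    using sq_sum_le_card_mul_sum_sq (s := s.disjSum t) (f := Sum.elim f (-g))

theorem sq_diagSum_sub_le (z : ℕ → ℕ → ℝ) {n i : ℕ} (hi : i ≤ n) :
    (diagSum z n i - diagSum z n (n - i)) ^ 2 ≤
      n * (diagSum (fun a b => z a b ^ 2) n i + diagSum (fun a b => z a b ^ 2) n (n - i)) := by
  have hcard : ((#(Icc 1 (n - i)) + #(Icc 1 (n - (n - i))) : ℕ) : ℝ) = n := by
    simp only [Nat.card_Icc]; congr 1; omega
  push_cast at hcard
  rw [diagSum, diagSum, diagSum, diagSum, ← hcard]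
  exact sq_sum_sub_sum_le _ _ _ _

theorem sum_add_reflect_le_sum {M : Type*} [AddCommMonoid M] [PartialOrder M]
    [IsOrderedAddMonoid M] {Q : ℕ → M} (hQ : ∀ d, 0 ≤ Q d) (n : ℕ) :
    ∑ i ∈ Icc 1 ((n - 1) / 2), (Q i + Q (n - i)) ≤ ∑ d ∈ Icc 1 (n - 1), Q d := by
  set I := Icc 1 ((n - 1) / 2)
  have hinj : Set.InjOn (n - ·) I := by
    intro a ha b hb h; simp only [coe_Icc, Set.mem_Icc, I] at ha hb h; omega
  have hdisj : Disjoint I (I.image (n - ·)) := by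
    simp only [disjoint_left, mem_image, I, mem_Icc]; omega
  calc ∑ i ∈ I, (Q i + Q (n - i))
      = ∑ d ∈ I ∪ I.image (n - ·), Q d := by
        rw [sum_add_distrib, sum_union hdisj, sum_image hinj]
    _ ≤ ∑ d ∈ Icc 1 (n - 1), Q d :=
        sum_le_sum_of_subset_of_nonneg
          (by
            intro d hd
            simp only [mem_union, mem_image, I, mem_Icc] at hd ⊢
            rcases hd with hd | ⟨i, hi, rfl⟩ <;> omega)
          (fun d _ _ => hQ d)

theorem sum_t_sq_le_general (n : ℕ) (z : ℕ → ℕ → ℝ) (t : ℕ → ℝ)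
    (ht : ∀ i, t i = (∑ j ∈ Finset.Icc 1 (n - i), z j (i + j)) -
        ∑ j ∈ Finset.Icc 1 i, z j (n - i + j)) :
    ∑ i ∈ Finset.Icc 1 ((n - 1) / 2), t i ^ 2 ≤
      (n : ℝ) * ∑ i ∈ Finset.Icc 1 n, ∑ j ∈ Finset.Icc (i + 1) n, z i j ^ 2 := by
  set zsq : ℕ → ℕ → ℝ := fun a b => z a b ^ 2
  have ht_diag : ∀ i ≤ n, t i = diagSum z n i - diagSum z n (n - i) := fun i hi => by
    rw [ht, diagSum, diagSum, Nat.sub_sub_self hi]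
  calc ∑ i ∈ Icc 1 ((n - 1) / 2), t i ^ 2
      ≤ ∑ i ∈ Icc 1 ((n - 1) / 2), (n : ℝ) * (diagSum zsq n i + diagSum zsq n (n - i)) :=
        sum_le_sum fun i hi => by
          have hin : i ≤ n := by simp only [mem_Icc] at hi; omega
          rw [ht_diag i hin]
          exact sq_diagSum_sub_le z hin
    _ ≤ n * ∑ d ∈ Icc 1 (n - 1), diagSum zsq n d := by
        rw [← mul_sum]
        gcongr
        exact sum_add_reflect_le_sum (fun d => sum_nonneg fun _ _ => sq_nonneg _) n
    _ = n * ∑ i ∈ Icc 1 n, ∑ j ∈ Icc (i + 1) n, zsq i j := by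
        rw [sum_upper_triangle_eq_sum_diagSum]

/-- Cauchy–Schwarz-type bound: `∑_{i=1}^{⌊(n−1)/2⌋} t_i² ≤ n ∑_{1≤i<j≤n} z_{i,j}²`. -/
theorem sum_t_sq_le (n : ℕ) (hn : 2 ≤ n) (z : ℕ → ℕ → ℝ) (t : ℕ → ℝ)
    (ht : ∀ i, t i = (∑ j ∈ Finset.Icc 1 (n - i), z j (i + j)) -
        ∑ j ∈ Finset.Icc 1 i, z j (n - i + j)) :
    ∑ i ∈ Finset.Icc 1 ((n - 1) / 2), t i ^ 2 ≤
      (n : ℝ) * ∑ i ∈ Finset.Icc 1 n, ∑ j ∈ Finset.Icc (i + 1) n, z i j ^ 2 :=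
  sum_t_sq_le_general n z t ht
end

section
/- Let P and Q be real 4×4 cyclic Hankel matrices. Then the commutator PQ − QP equals t·K, where t = z_{1,2} + z_{2,3} + z_{3,4} − z_{1,4} with z_{i,j} = p_i q_j − q_i p_j, and K is the 4×4 matrix with first row (0, 1, 0, −1) that is skew-symmetric cyclic Toeplitz (rows are successive cyclic shifts). -/
set_option maxHeartbeats 1000000


/-- For 4×4 cyclic Hankel matrices, `PQ − QP = t • K` with
`t = z₁₂ + z₂₃ + z₃₄ − z₁₄` and `K` the skew-symmetric cyclic Toeplitz
matrix with first row `(0, 1, 0, −1)`. -/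
theorem cyclic_hankel_four_commutator (p q : Fin 4 → ℝ)
    (P Q K : Matrix (Fin 4) (Fin 4) ℝ)
    (hP : ∀ i j, P i j = p (i + j))
    (hQ : ∀ i j, Q i j = q (i + j))
    (z : Fin 4 → Fin 4 → ℝ) (hz : ∀ a b, z a b = p a * q b - q a * p b)
    (hK : ∀ i j, K i j = if j - i = 1 then (1 : ℝ) else if j - i = 3 then -1 else 0) :
    P * Q - Q * P = (z 0 1 + z 1 2 + z 2 3 - z 0 3) • K := by
  ext i j
  fin_cases i <;> fin_cases j <;>
    simp (config := { decide := true }) [Matrix.mul_apply, hP, hQ, hz, hK,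
      Fin.sum_univ_four] <;> ring
end

section
/- Let P and Q be real n×n cyclic Hankel matrices. Then the commutator R = PQ − QP is skew-symmetric and cyclic Toeplitz; in particular R(i,j) depends only on (j−i) mod n and Rᵀ = −R. -/
/-!
A cyclic Hankel matrix `P i j = p (i + j)` is symmetric, so the commutator of two of them is
skew-symmetric. The entry `(P * Q) i j = ∑ x, p (i + x) * q (x + j)` is unchanged when `i` and `j`
are shifted by the same `k`, since reindexing `x ↦ x - k` absorbs the shift; hence `P * Q`, `Q * P`
and their difference are cyclic Toeplitz.
-/

open Matrix

section Hankel

variable {G R : Type*}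

theorem hankel_isSymm [AddCommMagma G] {P : Matrix G G R} {p : G → R}
    (hP : ∀ i j, P i j = p (i + j)) : P.IsSymm := by
  ext i j
  rw [transpose_apply, hP, hP, add_comm]

theorem hankel_mul_hankel_apply_add_add [AddCommGroup G] [Fintype G] [NonUnitalNonAssocSemiring R]
    {P Q : Matrix G G R} {p q : G → R} (hP : ∀ i j, P i j = p (i + j))
    (hQ : ∀ i j, Q i j = q (i + j)) (i j k : G) :
    (P * Q) (i + k) (j + k) = (P * Q) i j := by
  simp only [mul_apply, hP, hQ]
  rw [← (Equiv.subRight k).sum_comp]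
  congr! 3 <;> simp only [Equiv.subRight_apply] <;> abel

theorem apply_eq_apply_of_sub_eq_sub [AddCommGroup G] {M : Matrix G G R}
    (hM : ∀ i j k, M (i + k) (j + k) = M i j) {i j i' j' : G} (h : j - i = j' - i') :
    M i j = M i' j' := by
  have hi : i' = i + (i' - i) := (add_sub_cancel i i').symm
  have hj : j' = j + (i' - i) := by rw [← sub_add_cancel j' i', ← h]; abel
  rw [hi, hj, hM]

theorem commutator_transpose_of_isSymm [Fintype G] [CommRing R] {A B : Matrix G G R}
    (hA : A.IsSymm) (hB : B.IsSymm) : (A * B - B * A)ᵀ = -(A * B - B * A) := by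
  rw [transpose_sub, transpose_mul, transpose_mul, hA.eq, hB.eq, neg_sub]

end Hankel

/-- For cyclic Hankel matrices `P, Q`, the commutator `R = PQ − QP` is
skew-symmetric and cyclic Toeplitz: `Rᵀ = −R` and `R i j` depends only on `j − i` (mod n). -/
theorem cyclic_hankel_commutator_structure (n : ℕ) [NeZero n] (p q : Fin n → ℝ)
    (P Q : Matrix (Fin n) (Fin n) ℝ)
    (hP : ∀ i j, P i j = p (i + j))
    (hQ : ∀ i j, Q i j = q (i + j)) :
    (P * Q - Q * P)ᵀ = -(P * Q - Q * P) ∧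
    ∀ i j i' j' : Fin n, j - i = j' - i' →
      (P * Q - Q * P) i j = (P * Q - Q * P) i' j' := by
  refine ⟨commutator_transpose_of_isSymm (hankel_isSymm hP) (hankel_isSymm hQ),
    fun i j i' j' h => apply_eq_apply_of_sub_eq_sub (fun i j k => ?_) h⟩
  rw [Matrix.sub_apply, Matrix.sub_apply, hankel_mul_hankel_apply_add_add hP hQ,
    hankel_mul_hankel_apply_add_add hQ hP]
end

section
/- For real numbers z_{i,j} (1 ≤ i < j ≤ 5) satisfying the Plücker relations z_{i,j} z_{k,l} + z_{i,l} z_{j,k} − z_{i,k} z_{j,l} = 0 for all 1 ≤ i < j < k < l ≤ 5 (equivalently, z_{i,j} = p_i q_j − q_i p_j for some p, q ∈ ℝ⁵), the following identity holds: 2z_{1,2}² + 3z_{1,3}² + 6z_{2,3}² + 2z_{1,4}² + 4z_{2,4}² + 6z_{3,4}² + z_{1,5}² + 2z_{2,5}² + 3z_{3,5}² + 2z_{4,5}² − (z_{1,3}+z_{2,4}+z_{3,5})² − (z_{1,2}+z_{2,3}+z_{3,4})² − (z_{2,3}+z_{3,4}+z_{4,5})² = (z_{1,2}−z_{2,3}−z_{3,4}+z_{4,5})²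 + 3(z_{2,3}−z_{3,4})² + (1/6)(z_{1,3}+2z_{1,5}+z_{3,5})² + (3/2)(z_{1,3}−z_{3,5})² + (1/3)(z_{1,3}−3z_{2,4}−z_{1,5}+z_{3,5})² + (1/2)(z_{1,4}+z_{2,5})² + (3/2)(z_{1,4}−z_{2,5})². -/
/-- Sum-of-squares identity for the minors `z i j = p i q j − q i p j` of `p, q ∈ ℝ⁵`
(indices written 0-based: `z 0 1` is `z_{1,2}`, etc.). -/
theorem hankel3_sos_identity (p q : Fin 5 → ℝ)
    (z : Fin 5 → Fin 5 → ℝ) (hz : ∀ a b, z a b = p a * q b - q a * p b) :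
    2 * z 0 1 ^ 2 + 3 * z 0 2 ^ 2 + 6 * z 1 2 ^ 2 + 2 * z 0 3 ^ 2 +
      4 * z 1 3 ^ 2 + 6 * z 2 3 ^ 2 + z 0 4 ^ 2 + 2 * z 1 4 ^ 2 +
      3 * z 2 4 ^ 2 + 2 * z 3 4 ^ 2 -
      (z 0 2 + z 1 3 + z 2 4) ^ 2 - (z 0 1 + z 1 2 + z 2 3) ^ 2 -
      (z 1 2 + z 2 3 + z 3 4) ^ 2 =
    (z 0 1 - z 1 2 - z 2 3 + z 3 4) ^ 2 + 3 * (z 1 2 - z 2 3) ^ 2 +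
      (1 / 6) * (z 0 2 + 2 * z 0 4 + z 2 4) ^ 2 + (3 / 2) * (z 0 2 - z 2 4) ^ 2 +
      (1 / 3) * (z 0 2 - 3 * z 1 3 - z 0 4 + z 2 4) ^ 2 +
      (1 / 2) * (z 0 3 + z 1 4) ^ 2 + (3 / 2) * (z 0 3 - z 1 4) ^ 2 := by
  simp only [hz]; ring
end

section
/- For real 3×3 Hankel matrices P = (p_{i+j−1})_{i,j=1}^3 and Q = (q_{i+j−1})_{i,j=1}^3 with p, q ∈ ℝ⁵, the Böttcher–Wenzel form 2(‖P‖²‖Q‖² − trace(PᵀQ)²) − ‖PQ−QP‖² is a sum of squares of quadratic forms in (p,q); in particular it equals (z_{1,2}−z_{2,3}−z_{3,4}+z_{4,5})² + 3(z_{2,3}−z_{3,4})² + (1/6)(z_{1,3}+2z_{1,5}+z_{3,5})² + (3/2)(z_{1,3}−z_{3,5})² + (1/3)(z_{1,3}−3z_{2,4}−z_{1,5}+z_{3,5})² + (1/2)(z_{1,4}+z_{2,5})² + (3/2)(z_{1,4}−z_{2,5})², where z_{i,j} = p_i q_j − q_i p_j. -/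
open Matrix

set_option maxHeartbeats 4000000

/-- For 3×3 Hankel matrices `P = (p_{i+j−1})`, `Q = (q_{i+j−1})` the
Böttcher–Wenzel form is a sum of squares of quadratic forms in `(p, q)`:
it equals twice the displayed sum of squares, where `z a b = p a q b − q a p b`
(0-based indices). -/
theorem hankel3_bw_sos (p q : Fin 5 → ℝ)
    (P Q : Matrix (Fin 3) (Fin 3) ℝ)
    (hP : ∀ i j, P i j = p ⟨i.val + j.val, by omega⟩)
    (hQ : ∀ i j, Q i j = q ⟨i.val + j.val, by omega⟩)
    (z : Fin 5 → Fin 5 → ℝ) (hz : ∀ a b, z a b = p a * q b - q a * p b) :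
    2 * (Matrix.trace (Pᵀ * P) * Matrix.trace (Qᵀ * Q) -
        (Matrix.trace (Pᵀ * Q)) ^ 2) -
      Matrix.trace ((P * Q - Q * P)ᵀ * (P * Q - Q * P)) =
    2 * ((z 0 1 - z 1 2 - z 2 3 + z 3 4) ^ 2 + 3 * (z 1 2 - z 2 3) ^ 2 +
      (1 / 6) * (z 0 2 + 2 * z 0 4 + z 2 4) ^ 2 + (3 / 2) * (z 0 2 - z 2 4) ^ 2 +
      (1 / 3) * (z 0 2 - 3 * z 1 3 - z 0 4 + z 2 4) ^ 2 +
      (1 / 2) * (z 0 3 + z 1 4) ^ 2 + (3 / 2) * (z 0 3 - z 1 4) ^ 2) := by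
  simp only [Matrix.trace, Matrix.diag, Matrix.mul_apply, Matrix.transpose_apply,
    Matrix.sub_apply, Fin.sum_univ_succ, Fin.sum_univ_zero, hP, hQ, hz]
  have h2 : ∀ h, (⟨2, h⟩ : Fin 5) = 2 := fun _ => rfl
  have h3 : ∀ h, (⟨3, h⟩ : Fin 5) = 3 := fun _ => rfl
  have h4 : ∀ h, (⟨4, h⟩ : Fin 5) = 4 := fun _ => rfl
  norm_num [h2, h3, h4]
  ring
end

section
/- The 10×10 symmetric integer matrix M with rows (3,0,−2,0,−1,0,−1,0,0,0), (0,3,0,−2,0,1,0,−1,0,0), (−2,0,3,0,0,0,−1,−1,0,0), (0,−2,0,3,−1,1,0,0,0,0), (−1,0,0,−1,5,0,0,−1,−1,1), (0,1,0,1,0,3,−1,0,0,0), (−1,0,−1,0,0,−1,3,0,0,0), (0,−1,−1,0,−1,0,0,5,1,−1), (0,0,0,0,−1,0,0,1,5,0), (0,0,0,0,1,0,0,−1,0,5) is positive semidefinite with rank 8; its eigenvalues are 0, 0, 3, 3, 4, 5, 5, 5, 5, 8. -/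
open Polynomial

namespace DualBlockAux

def Az : Matrix (Fin 10) (Fin 10) ℤ :=
  !![3, 0, -2, 0, -1, 0, -1, 0, 0, 0;
     0, 3, 0, -2, 0, 1, 0, -1, 0, 0;
     -2, 0, 3, 0, 0, 0, -1, -1, 0, 0;
     0, -2, 0, 3, -1, 1, 0, 0, 0, 0;
     -1, 0, 0, -1, 5, 0, 0, -1, -1, 1;
     0, 1, 0, 1, 0, 3, -1, 0, 0, 0;
     -1, 0, -1, 0, 0, -1, 3, 0, 0, 0;
     0, -1, -1, 0, -1, 0, 0, 5, 1, -1;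
     0, 0, 0, 0, -1, 0, 0, 1, 5, 0;
     0, 0, 0, 0, 1, 0, 0, -1, 0, 5]

def Pz : Matrix (Fin 10) (Fin 10) ℤ :=
  !![1, 1, -1, -1, 0, -1, -1, -1, 1, -1;
     -1, 3, 1, 1, 0, -1, -1, 0, 0, 1;
     1, 1, -1, 1, 0, 1, 0, 1, -1, 1;
     -1, 3, 1, -1, 0, 1, 0, 0, 0, -1;
     0, 1, 0, -2, 1, 0, 1, 0, 0, 3;
     1, -2, 2, 0, 1, 0, -1, 0, 0, 0;
     1, 0, 2, 0, -1, 0, 1, 0, 0, 0;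
     0, 1, 0, 2, 1, 0, 1, 0, 0, -3;
     0, 0, 0, -2, 0, 0, 0, 1, 0, -2;
     0, 0, 0, 2, 0, 0, 0, 0, 1, 2]

def Qz : Matrix (Fin 10) (Fin 10) ℤ :=
  !![16, -4, 16, -4, 3, 7, 13, 3, 0, 0;
     6, 6, 6, 6, 3, -3, 3, 3, 0, 0;
     -5, 5, -5, 5, 0, 10, 10, 0, 0, 0;
     -3, 3, 3, -3, -6, 0, 0, 6, -6, 6;
     0, 0, 0, 0, 15, 15, -15, 15, 0, 0;
     -2, -22, 8, 28, -6, 6, -6, -6, -10, 10;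
     -6, -6, -6, -6, 12, -12, 12, 12, 0, 0;
     -10, 10, 10, -10, 0, 0, 0, 0, 40, 20;
     10, -10, -10, 10, 0, 0, 0, 0, 20, 40;
     -2, 2, 2, -2, 6, 0, 0, -6, -4, 4]

def Lz : Matrix (Fin 10) (Fin 10) ℤ :=
  !![51870, 0, 0, 0, 0, 0, 0, 0, 0, 0;
     0, 51870, 0, 0, 0, 0, 0, 0, 0, 0;
     -34580, 0, 51870, 0, 0, 0, 0, 0, 0, 0;
     0, -34580, 0, 51870, 0, 0, 0, 0, 0, 0;
     -17290, 0, -20748, -31122, 51870, 0, 0, 0, 0, 0;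
     0, 17290, 0, 51870, 13650, 51870, 0, 0, 0, 0;
     -17290, 0, -51870, 0, -13650, -51870, 51870, 0, 0, 0;
     0, -17290, -31122, -20748, -24570, 103740, 0, 51870, 0, 0;
     0, 0, 0, 0, -13650, 18525, 0, 0, 51870, 0;
     0, 0, 0, 0, 13650, -18525, 0, 0, 3990, 51870]

def d2z : Fin 10 → ℤ :=
  ![8071490700, 8071490700, 4484161500, 4484161500, 10223888220, 1982471400, 0, 0,
    12491592750, 12417678000]

def dz : Fin 10 → ℤ := ![0, 0, 3, 3, 4, 5, 5, 5, 5, 8]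

def dR : Fin 10 → ℝ := ![0, 0, 3, 3, 4, 5, 5, 5, 5, 8]

set_option maxHeartbeats 1000000 in
theorem hPQz : Pz * Qz = (60 : ℤ) • 1 := by decide

set_option maxHeartbeats 1000000 in
theorem hQPz : Qz * Pz = (60 : ℤ) • 1 := by decide

set_option maxHeartbeats 1000000 in
theorem hAPz : Az * Pz = Pz * Matrix.diagonal dz := by decide

set_option maxHeartbeats 1000000 in
theorem hLz : Lz * Matrix.diagonal d2z * Lz.transpose = (7238773568909610000 : ℤ) • Az := by
  decide

/-- cast of an integer matrix to the reals -/
noncomputable def cR (M : Matrix (Fin 10) (Fin 10) ℤ) : Matrix (Fin 10) (Fin 10) ℝ :=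
  M.map (Int.cast : ℤ → ℝ)

theorem cR_mul (M N : Matrix (Fin 10) (Fin 10) ℤ) : cR (M * N) = cR M * cR N := by
  ext i j
  simp only [cR, Matrix.map_apply, Matrix.mul_apply]
  push_cast
  ring

theorem cR_one : cR (1 : Matrix (Fin 10) (Fin 10) ℤ) = 1 :=
  Matrix.map_one _ Int.cast_zero Int.cast_one

theorem cR_smul (k : ℤ) (M : Matrix (Fin 10) (Fin 10) ℤ) :
    cR (k • M) = (k : ℝ) • cR M := by
  ext i j
  simp only [cR, Matrix.map_apply, Matrix.smul_apply, smul_eq_mul, Int.cast_mul]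

theorem cR_transpose (M : Matrix (Fin 10) (Fin 10) ℤ) : cR M.transpose = (cR M).transpose :=
  Matrix.transpose_map

theorem charpoly_conj {n R : Type*} [Fintype n] [DecidableEq n] [CommRing R]
    (P A Q : Matrix n n R) (hPQ : P * Q = 1) :
    (P * A * Q).charpoly = A.charpoly := by
  classical
  set Cm : Matrix n n R →+* Matrix n n (Polynomial R) :=
    (Polynomial.C : R →+* Polynomial R).mapMatrix with hCmdef
  have hPQc : Cm P * Cm Q = (1 : Matrix n n (Polynomial R)) := by
    rw [← map_mul, hPQ, map_one]
  have hsc : Matrix.scalar n (Polynomial.X : Polynomial R) * Cm P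
      = Cm P * Matrix.scalar n Polynomial.X :=
    (Matrix.scalar_commute (Polynomial.X : Polynomial R)
      (fun r' => Commute.all _ r') (Cm P)).eq
  have h1 : Matrix.charmatrix (P * A * Q) = Cm P * Matrix.charmatrix A * Cm Q := by
    have expand : Cm P * Matrix.charmatrix A * Cm Q
        = Cm P * Matrix.scalar n Polynomial.X * Cm Q - Cm P * Cm A * Cm Q := by
      rw [Matrix.charmatrix]
      noncomm_ring
    have t1 : Cm P * Matrix.scalar n Polynomial.X * Cm Q
        = Matrix.scalar n Polynomial.X := by
      rw [← hsc, mul_assoc, hPQc, mul_one]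
    have t2 : Cm P * Cm A * Cm Q = Cm (P * A * Q) := by
      rw [← map_mul, ← map_mul]
    rw [expand, t1, t2, Matrix.charmatrix]
  rw [Matrix.charpoly, Matrix.charpoly, h1, Matrix.det_mul, Matrix.det_mul]
  calc (Cm P).det * (Matrix.charmatrix A).det * (Cm Q).det
      = ((Cm P).det * (Cm Q).det) * (Matrix.charmatrix A).det := by ring
    _ = (Cm P * Cm Q).det * (Matrix.charmatrix A).det := by rw [Matrix.det_mul]
    _ = (Matrix.charmatrix A).det := by rw [hPQc, Matrix.det_one, one_mul]

end DualBlockAux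

open DualBlockAux

/-- The first 10×10 diagonal block of the dual slack matrix `2S` for `n = 3`:
it is positive semidefinite of rank 8, with eigenvalues (with multiplicity)
`0, 0, 3, 3, 4, 5, 5, 5, 5, 8`, i.e. characteristic polynomial
`X²(X−3)²(X−4)(X−5)⁴(X−8)`. -/



theorem dual_block_psd :
    (!![3, 0, -2, 0, -1, 0, -1, 0, 0, 0;
       0, 3, 0, -2, 0, 1, 0, -1, 0, 0;
       -2, 0, 3, 0, 0, 0, -1, -1, 0, 0;
       0, -2, 0, 3, -1, 1, 0, 0, 0, 0;
       -1, 0, 0, -1, 5, 0, 0, -1, -1, 1;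
       0, 1, 0, 1, 0, 3, -1, 0, 0, 0;
       -1, 0, -1, 0, 0, -1, 3, 0, 0, 0;
       0, -1, -1, 0, -1, 0, 0, 5, 1, -1;
       0, 0, 0, 0, -1, 0, 0, 1, 5, 0;
       0, 0, 0, 0, 1, 0, 0, -1, 0, 5] : Matrix (Fin 10) (Fin 10) ℝ).PosSemidef ∧
    (!![3, 0, -2, 0, -1, 0, -1, 0, 0, 0;
       0, 3, 0, -2, 0, 1, 0, -1, 0, 0;
       -2, 0, 3, 0, 0, 0, -1, -1, 0, 0;
       0, -2, 0, 3, -1, 1, 0, 0, 0, 0;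
       -1, 0, 0, -1, 5, 0, 0, -1, -1, 1;
       0, 1, 0, 1, 0, 3, -1, 0, 0, 0;
       -1, 0, -1, 0, 0, -1, 3, 0, 0, 0;
       0, -1, -1, 0, -1, 0, 0, 5, 1, -1;
       0, 0, 0, 0, -1, 0, 0, 1, 5, 0;
       0, 0, 0, 0, 1, 0, 0, -1, 0, 5] : Matrix (Fin 10) (Fin 10) ℝ).rank = 8 ∧
    (!![3, 0, -2, 0, -1, 0, -1, 0, 0, 0;
       0, 3, 0, -2, 0, 1, 0, -1, 0, 0;
       -2, 0, 3, 0, 0, 0, -1, -1, 0, 0;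
       0, -2, 0, 3, -1, 1, 0, 0, 0, 0;
       -1, 0, 0, -1, 5, 0, 0, -1, -1, 1;
       0, 1, 0, 1, 0, 3, -1, 0, 0, 0;
       -1, 0, -1, 0, 0, -1, 3, 0, 0, 0;
       0, -1, -1, 0, -1, 0, 0, 5, 1, -1;
       0, 0, 0, 0, -1, 0, 0, 1, 5, 0;
       0, 0, 0, 0, 1, 0, 0, -1, 0, 5] : Matrix (Fin 10) (Fin 10) ℝ).charpoly =
      X ^ 2 * (X - 3) ^ 2 * (X - 4) * (X - 5) ^ 4 * (X - 8) := by
  have hA : (!![3, 0, -2, 0, -1, 0, -1, 0, 0, 0;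
       0, 3, 0, -2, 0, 1, 0, -1, 0, 0;
       -2, 0, 3, 0, 0, 0, -1, -1, 0, 0;
       0, -2, 0, 3, -1, 1, 0, 0, 0, 0;
       -1, 0, 0, -1, 5, 0, 0, -1, -1, 1;
       0, 1, 0, 1, 0, 3, -1, 0, 0, 0;
       -1, 0, -1, 0, 0, -1, 3, 0, 0, 0;
       0, -1, -1, 0, -1, 0, 0, 5, 1, -1;
       0, 0, 0, 0, -1, 0, 0, 1, 5, 0;
       0, 0, 0, 0, 1, 0, 0, -1, 0, 5] : Matrix (Fin 10) (Fin 10) ℝ) = cR Az := by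
    ext i j
    fin_cases i <;> fin_cases j <;>
      first
        | (show (0:ℝ) = ((0:ℤ):ℝ); norm_num)
        | (show (1:ℝ) = ((1:ℤ):ℝ); norm_num)
        | (show (3:ℝ) = ((3:ℤ):ℝ); norm_num)
        | (show (5:ℝ) = ((5:ℤ):ℝ); norm_num)
        | (show (-1:ℝ) = ((-1:ℤ):ℝ); norm_num)
        | (show (-2:ℝ) = ((-2:ℤ):ℝ); norm_num)
  rw [hA]
  have hPQ : cR Pz * ((60 : ℝ)⁻¹ • cR Qz) = 1 := by
    rw [Matrix.mul_smul, ← cR_mul, hPQz, cR_smul, smul_smul]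
    norm_num [cR_one]
  have hQP : ((60 : ℝ)⁻¹ • cR Qz) * cR Pz = 1 := by
    rw [Matrix.smul_mul, ← cR_mul, hQPz, cR_smul, smul_smul]
    norm_num [cR_one]
  have hdRz : ∀ i, dR i = ((dz i : ℤ) : ℝ) := by
    intro i
    fin_cases i <;>
      first
        | (show (0:ℝ) = ((0:ℤ):ℝ); norm_num)
        | (show (3:ℝ) = ((3:ℤ):ℝ); norm_num)
        | (show (4:ℝ) = ((4:ℤ):ℝ); norm_num)
        | (show (5:ℝ) = ((5:ℤ):ℝ); norm_num)
        | (show (8:ℝ) = ((8:ℤ):ℝ); norm_num)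
  have hDmap : cR (Matrix.diagonal dz) = Matrix.diagonal dR := by
    rw [show cR (Matrix.diagonal dz) = (Matrix.diagonal dz).map (Int.cast : ℤ → ℝ) from rfl,
      Matrix.diagonal_map (by simp)]
    exact congrArg Matrix.diagonal (funext fun i => (hdRz i).symm)
  have hAP : cR Az * cR Pz = cR Pz * Matrix.diagonal dR := by
    rw [← hDmap, ← cR_mul, ← cR_mul, hAPz]
  have hfact : cR Az = cR Pz * Matrix.diagonal dR * ((60 : ℝ)⁻¹ • cR Qz) := by
    calc cR Az = cR Az * (cR Pz * ((60 : ℝ)⁻¹ • cR Qz)) := by rw [hPQ, mul_one]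
      _ = (cR Az * cR Pz) * ((60 : ℝ)⁻¹ • cR Qz) := by rw [mul_assoc]
      _ = cR Pz * Matrix.diagonal dR * ((60 : ℝ)⁻¹ • cR Qz) := by rw [hAP]
  refine ⟨?_, ?_, ?_⟩
  · have hdpos : (Matrix.diagonal (fun i => ((d2z i : ℤ) : ℝ))).PosSemidef :=
      Matrix.posSemidef_diagonal_iff.mpr (fun i => by
        have := (by decide : ∀ j, (0:ℤ) ≤ d2z j) i
        exact_mod_cast this)
    have hpsd := hdpos.mul_mul_conjTranspose_same ((2690496900 : ℝ)⁻¹ • cR Lz)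
    have key : ((2690496900 : ℝ)⁻¹ • cR Lz) * Matrix.diagonal (fun i => ((d2z i : ℤ) : ℝ)) *
        ((2690496900 : ℝ)⁻¹ • cR Lz).conjTranspose = cR Az := by
      have hDg : Matrix.diagonal (fun i => ((d2z i : ℤ) : ℝ)) = cR (Matrix.diagonal d2z) := by
        rw [show cR (Matrix.diagonal d2z) = (Matrix.diagonal d2z).map (Int.cast : ℤ → ℝ) from rfl,
          Matrix.diagonal_map (by simp)]
      have hCT : ((2690496900 : ℝ)⁻¹ • cR Lz).conjTranspose = (2690496900 : ℝ)⁻¹ • cR Lz.transpose := by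
        rw [Matrix.conjTranspose_smul, Matrix.conjTranspose_eq_transpose_of_trivial,
          ← cR_transpose, star_trivial]
      rw [hDg, hCT, Matrix.smul_mul, Matrix.smul_mul, Matrix.mul_smul,
        smul_smul, ← cR_mul, ← cR_mul, hLz, cR_smul, smul_smul]
      norm_num
    rw [← key]
    exact hpsd
  · rw [hfact, mul_assoc,
      Matrix.rank_mul_eq_right_of_isUnit_det (cR Pz) _
        (Matrix.isUnit_det_of_right_inverse hPQ),
      Matrix.rank_mul_eq_left_of_isUnit_det ((60 : ℝ)⁻¹ • cR Qz) _
        (Matrix.isUnit_det_of_right_inverse hQP),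
      Matrix.rank_diagonal]
    rw [Fintype.card_congr (Equiv.subtypeEquivRight (q := fun i => dz i ≠ 0)
      (fun i => by rw [hdRz i]; exact not_congr Int.cast_eq_zero))]
    decide
  · rw [hfact, charpoly_conj _ _ _ hPQ,
      Matrix.charpoly_of_upperTriangular _ (Matrix.blockTriangular_diagonal dR)]
    simp only [Matrix.diagonal_apply_eq, dR, Fin.prod_univ_succ, Fin.prod_univ_zero,
      Matrix.cons_val_zero, Matrix.cons_val_succ, map_ofNat, Polynomial.C_0, mul_one]
    ring
end

section
/- Let n ≥ 2 and let D be the (n−2)×(n−2) diagonal matrix with diagonal entries (n−2)(n−1), (n−3)(n−2), …, 2·3, 1·2 (i.e., D_{ii} = (n−1−i)(n−i)), and let H be the (n−2)×(n−2) symmetric matrix with H_{ij} = −min(i, j, n−1−i, n−1−j). Then the block matrix B = [[D, H],[H, D]] is positive semidefinite for n ≤ 7, and for n = 8 the matrix B has a negative eigenvalue (equivalently, B is not positive semidefinite for n = 8). -/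
/-!
The block matrix `B = [[D, H], [H, D]]` has nonpositive off-diagonal entries. A symmetric matrix
with this sign pattern is positive semidefinite as soon as some positive vector `w` has `B w ≥ 0`:
substituting `x = w ∘ y`, every off-diagonal term of `xᵀ B x` is bounded below through
`2 yᵢ yⱼ ≤ yᵢ² + yⱼ²`, leaving `∑ᵢ wᵢ yᵢ² (B w)ᵢ ≥ 0`. Conversely, a positive `u` with `B u < 0`
gives `uᵀ B u < 0`. On vectors `(v, v)` the matrix `B` acts as `D + H`, and the solution of
`(D + H) v = 𝟙` is positive for `n ≤ 7` but negative for `n = 8`.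
-/

open Matrix Finset

namespace Matrix

variable {ι m n R : Type*}

theorem PosSemidef.of_offDiag_nonpos_of_mulVec_nonneg [Fintype ι] [Field R] [LinearOrder R]
    [IsStrictOrderedRing R] [StarRing R] [TrivialStar R] {A : Matrix ι ι R} (hA : A.IsSymm)
    (hoff : ∀ i j, i ≠ j → A i j ≤ 0) {w : ι → R} (hw : ∀ i, 0 < w i)
    (hAw : ∀ i, 0 ≤ (A *ᵥ w) i) : A.PosSemidef := by
  refine .of_dotProduct_mulVec_nonneg (isHermitian_iff_isSymm.2 hA) fun x => ?_
  obtain ⟨y, rfl⟩ : ∃ y : ι → R, x = fun i => w i * y i :=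
    ⟨fun i => x i / w i, funext fun i => (mul_div_cancel₀ _ (hw i).ne').symm⟩
  have hterm : ∀ i j, A i j * (w i * w j) * ((y i ^ 2 + y j ^ 2) / 2) ≤
      A i j * (w i * w j) * (y i * y j) := by
    intro i j
    rcases eq_or_ne i j with rfl | hij
    · exact le_of_eq (by ring)
    · exact mul_le_mul_of_nonpos_left (by nlinarith [sq_nonneg (y i - y j)])
        (mul_nonpos_of_nonpos_of_nonneg (hoff i j hij) (mul_pos (hw i) (hw j)).le)
  have hswap : ∑ i, ∑ j, A i j * (w i * w j) * y j ^ 2 =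
      ∑ i, ∑ j, A i j * (w i * w j) * y i ^ 2 := by
    rw [Finset.sum_comm]
    refine sum_congr rfl fun i _ => sum_congr rfl fun j _ => ?_
    rw [hA.apply i j]
    ring
  calc 0 ≤ ∑ i, w i * y i ^ 2 * (A *ᵥ w) i :=
        sum_nonneg fun i _ => mul_nonneg (mul_nonneg (hw i).le (sq_nonneg _)) (hAw i)
    _ = ∑ i, ∑ j, A i j * (w i * w j) * y i ^ 2 := by
        simp only [mulVec, dotProduct, mul_sum]
        exact sum_congr rfl fun i _ => sum_congr rfl fun j _ => by ring
    _ = ∑ i, ∑ j, A i j * (w i * w j) * ((y i ^ 2 + y j ^ 2) / 2) := by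
        simp only [add_div, mul_add, mul_div_assoc', sum_add_distrib, ← sum_div, hswap]
        ring
    _ ≤ ∑ i, ∑ j, A i j * (w i * w j) * (y i * y j) :=
        sum_le_sum fun i _ => sum_le_sum fun j _ => hterm i j
    _ = star (fun i => w i * y i) ⬝ᵥ (A *ᵥ fun i => w i * y i) := by
        simp only [star_trivial, dotProduct, mulVec, mul_sum]
        exact sum_congr rfl fun i _ => sum_congr rfl fun j _ => by ring

theorem not_posSemidef_of_pos_mulVec_neg [Fintype ι] [Nonempty ι] [Ring R] [PartialOrder R]
    [IsStrictOrderedRing R] [StarRing R] [TrivialStar R] {A : Matrix ι ι R} {u : ι → R}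
    (hu : ∀ i, 0 < u i) (hAu : ∀ i, (A *ᵥ u) i < 0) : ¬A.PosSemidef := fun hA =>
  (hA.dotProduct_mulVec_nonneg u).not_gt <| by
    simpa only [star_trivial, dotProduct] using
      sum_neg (fun i _ => mul_neg_of_pos_of_neg (hu i) (hAu i)) univ_nonempty

theorem fromBlocks_offDiag_nonpos [Preorder R] [Zero R] {A : Matrix m m R} {B : Matrix m n R}
    {C : Matrix n m R} {D : Matrix n n R} (hA : ∀ i j, i ≠ j → A i j ≤ 0) (hB : ∀ i j, B i j ≤ 0)
    (hC : ∀ i j, C i j ≤ 0) (hD : ∀ i j, i ≠ j → D i j ≤ 0) :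
    ∀ i j, i ≠ j → fromBlocks A B C D i j ≤ 0
  | .inl i, .inl j, h => hA i j (ne_of_apply_ne _ h)
  | .inl i, .inr j, _ => hB i j
  | .inr i, .inl j, _ => hC i j
  | .inr i, .inr j, h => hD i j (ne_of_apply_ne _ h)

theorem fromBlocks_mulVec_sum_elim_self [Fintype m] [NonUnitalNonAssocSemiring R]
    (A C : Matrix m m R) (v : m → R) :
    fromBlocks A C C A *ᵥ Sum.elim v v = Sum.elim ((A + C) *ᵥ v) ((A + C) *ᵥ v) := by
  rw [fromBlocks_mulVec, add_mulVec, Sum.elim_comp_inl, Sum.elim_comp_inr, add_comm (C *ᵥ v)]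

end Matrix

def toeplitzDiag (n : ℕ) : Matrix (Fin (n - 2)) (Fin (n - 2)) ℝ :=
  diagonal fun i => (((n - 2 - i.val) * (n - 1 - i.val) : ℕ) : ℝ)

def toeplitzBorder (n : ℕ) : Matrix (Fin (n - 2)) (Fin (n - 2)) ℝ :=
  of fun i j => -((min (min (i.val + 1) (j.val + 1)) (min (n - 2 - i.val) (n - 2 - j.val)) : ℕ) : ℝ)

theorem toeplitzDiag_offDiag_nonpos (n : ℕ) : ∀ i j, i ≠ j → toeplitzDiag n i j ≤ 0 :=
  fun _ _ h => (diagonal_apply_ne _ h).le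

theorem toeplitzBorder_nonpos (n : ℕ) : ∀ i j, toeplitzBorder n i j ≤ 0 :=
  fun _ _ => neg_nonpos.2 (Nat.cast_nonneg _)

theorem toeplitzBorder_isSymm (n : ℕ) : (toeplitzBorder n).IsSymm := by
  ext i j
  simp only [transpose_apply, toeplitzBorder, of_apply, min_comm]

theorem exists_pos_toeplitz_mulVec_nonneg {n : ℕ} (hn : n ≤ 7) :
    ∃ w : Fin (n - 2) → ℝ, (∀ i, 0 < w i) ∧
      ∀ i, 0 ≤ ((toeplitzDiag n + toeplitzBorder n) *ᵥ w) i := by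
  interval_cases n
  iterate 3 exact ⟨1, fun _ => one_pos, finZeroElim⟩
  -- positive multiples of `(D + H)⁻¹ 𝟙`
  on_goal 1 => use ![1]
  on_goal 2 => use ![1, 3]
  on_goal 3 => use ![5, 12, 30]
  on_goal 4 => use ![9, 20, 40, 90]
  on_goal 5 => use ![457, 990, 1800, 3300, 6855]
  all_goals
    refine ⟨fun i => by fin_cases i <;> simp, fun i => ?_⟩
    simp only [mulVec, dotProduct, Fin.sum_univ_succ, Fin.sum_univ_zero, cons_val_zero,
      cons_val_succ, toeplitzDiag, toeplitzBorder, Matrix.add_apply, diagonal_apply, of_apply]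
    fin_cases i <;> norm_num [Fin.ext_iff]

theorem exists_pos_toeplitz_mulVec_neg_eight :
    ∃ u : Fin (8 - 2) → ℝ, (∀ i, 0 < u i) ∧
      ∀ i, ((toeplitzDiag 8 + toeplitzBorder 8) *ᵥ u) i < 0 := by
  -- `u = -36 (D + H)⁻¹ 𝟙`
  refine ⟨![12, 26, 45, 75, 130, 252], fun i => by fin_cases i <;> simp, fun i => ?_⟩
  simp only [mulVec, dotProduct, Fin.sum_univ_succ, Fin.sum_univ_zero, cons_val_zero,
    cons_val_succ, toeplitzDiag, toeplitzBorder, Matrix.add_apply, diagonal_apply, of_apply]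
  fin_cases i <;> norm_num [Fin.ext_iff]

theorem toeplitz_dual_block_general (n : ℕ)
    (D H : Matrix (Fin (n - 2)) (Fin (n - 2)) ℝ)
    (hD : D = Matrix.diagonal fun i => (((n - 2 - i.val) * (n - 1 - i.val) : ℕ) : ℝ))
    (hH : ∀ i j, H i j =
      -((min (min (i.val + 1) (j.val + 1)) (min (n - 2 - i.val) (n - 2 - j.val)) : ℕ) : ℝ)) :
    (n ≤ 7 → (Matrix.fromBlocks D H H D).PosSemidef) ∧
    (n = 8 → ¬ (Matrix.fromBlocks D H H D).PosSemidef) := by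
  obtain rfl : H = toeplitzBorder n := Matrix.ext hH
  obtain rfl : D = toeplitzDiag n := hD
  have hoff := fromBlocks_offDiag_nonpos (toeplitzDiag_offDiag_nonpos n)
    (toeplitzBorder_nonpos n) (toeplitzBorder_nonpos n) (toeplitzDiag_offDiag_nonpos n)
  refine ⟨fun hn => ?_, ?_⟩
  · obtain ⟨w, hw, hAw⟩ := exists_pos_toeplitz_mulVec_nonneg hn
    refine .of_offDiag_nonpos_of_mulVec_nonneg
      (.fromBlocks (isSymm_diagonal _) (toeplitzBorder_isSymm n) (isSymm_diagonal _)) hoff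
      (w := Sum.elim w w) (Sum.forall.2 ⟨hw, hw⟩) ?_
    rw [fromBlocks_mulVec_sum_elim_self]
    exact Sum.forall.2 ⟨hAw, hAw⟩
  · rintro rfl
    obtain ⟨u, hu, hAu⟩ := exists_pos_toeplitz_mulVec_neg_eight
    refine not_posSemidef_of_pos_mulVec_neg (u := Sum.elim u u) (Sum.forall.2 ⟨hu, hu⟩) ?_
    rw [fromBlocks_mulVec_sum_elim_self]
    exact Sum.forall.2 ⟨hAu, hAu⟩

/-- The crucial block `B = [[D, H], [H, D]]` of the dual slack matrix for Toeplitz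
matrices (with `D` diagonal with entries `(n−1−i)(n−i)`, `i = 1, …, n−2`, and
`H i j = −min(i, j, n−1−i, n−1−j)`, here written 0-based) is positive semidefinite
for `n ≤ 7` but not for `n = 8`. -/
theorem toeplitz_dual_block (n : ℕ) (hn : 2 ≤ n)
    (D H : Matrix (Fin (n - 2)) (Fin (n - 2)) ℝ)
    (hD : D = Matrix.diagonal fun i => (((n - 2 - i.val) * (n - 1 - i.val) : ℕ) : ℝ))
    (hH : ∀ i j, H i j =
      -((min (min (i.val + 1) (j.val + 1)) (min (n - 2 - i.val) (n - 2 - j.val)) : ℕ) : ℝ)) :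
    (n ≤ 7 → (Matrix.fromBlocks D H H D).PosSemidef) ∧
    (n = 8 → ¬ (Matrix.fromBlocks D H H D).PosSemidef) :=
  toeplitz_dual_block_general n D H hD hH
end
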